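/- arXiv:1810.04380 — 4 statements merged into one kernel-verified Lean document; each statement's English description precedes it below -/
import Mathlib

section
/- For p = 1/2, the transform α*(a₁,a₂) = inf_{θ∈ℝ²}(a₁θ₁ + a₂θ₂ + α(θ)) with α(θ) = -(θ₁+θ₂)/2 + (1/2)√((θ₁-θ₂)²+4) equals 2√(a₁a₂) when a₁+a₂ = 1 with a₁,a₂ ≥ 0, and equals -∞ when a₁+a₂ ≠ 1. -/
open Real

theorem stmt_3 (a₁ a₂ : ℝ) :
    let α : ℝ × ℝ → ℝ := fun θ =>
      -(θ.1 + θ.2)/2 + (1/2) * Real.sqrt ((θ.1 - θ.2)^2 + 4)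
    (a₁ + a₂ = 1 → 0 ≤ a₁ → 0 ≤ a₂ →
      IsGLB (Set.range fun θ : ℝ × ℝ => a₁ * θ.1 + a₂ * θ.2 + α θ)
        (2 * Real.sqrt (a₁ * a₂))) ∧
    (a₁ + a₂ ≠ 1 →
      ¬ BddBelow (Set.range fun θ : ℝ × ℝ => a₁ * θ.1 + a₂ * θ.2 + α θ)) := by
  intro α
  constructor
  · intro hsum h1 h2
    set s := Real.sqrt (a₁ * a₂) with hs
    have hs0 : 0 ≤ s := Real.sqrt_nonneg _
    have hs2 : s ^ 2 = a₁ * a₂ := Real.sq_sqrt (mul_nonneg h1 h2)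
    have hc2 : (a₁ - a₂) ^ 2 = 1 - 4 * s ^ 2 := by
      linear_combination (a₁ + a₂ + 1) * hsum + 4 * hs2
    -- lower bound inequality for all u
    have key : ∀ u : ℝ, 4 * s ≤ (a₁ - a₂) * u + Real.sqrt (u ^ 2 + 4) := by
      intro u
      have h1' : 4 * s - (a₁ - a₂) * u ≤ |4 * s - (a₁ - a₂) * u| := le_abs_self _
      have h2' : |4 * s - (a₁ - a₂) * u| = Real.sqrt ((4 * s - (a₁ - a₂) * u) ^ 2) :=
        (Real.sqrt_sq_eq_abs _).symm
      have h3' : Real.sqrt ((4 * s - (a₁ - a₂) * u) ^ 2) ≤ Real.sqrt (u ^ 2 + 4) := by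
        apply Real.sqrt_le_sqrt
        nlinarith [sq_nonneg (2 * s * u + 2 * (a₁ - a₂)), hc2]
      linarith
    have hval : ∀ x y : ℝ, a₁ * x + a₂ * y + α (x, y)
        = (a₁ - a₂) * (x - y) / 2 + (1/2) * Real.sqrt ((x - y) ^ 2 + 4) := by
      intro x y
      simp only [α]
      linear_combination ((x + y) / 2) * hsum
    constructor
    · rintro x ⟨θ, rfl⟩
      show 2 * s ≤ a₁ * θ.1 + a₂ * θ.2 + α θ
      have hv := hval θ.1 θ.2
      rw [show ((θ.1, θ.2) : ℝ × ℝ) = θ from rfl] at hv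
      rw [hv]
      have := key (θ.1 - θ.2)
      linarith
    · intro b hb
      rcases eq_or_lt_of_le (mul_nonneg h1 h2) with hz | hp
      · -- a₁ * a₂ = 0, s = 0
        have hszero : s = 0 := by rw [hs, ← hz, Real.sqrt_zero]
        have hc1 : (a₁ - a₂) ^ 2 = 1 := by rw [hc2, hszero]; ring
        by_contra hb'
        push_neg at hb'
        rw [hszero] at hb'
        have hbpos : 0 < b := by linarith
        obtain ⟨v, hv⟩ : ∃ v : ℝ, v = b - 1 / b - 1 := ⟨_, rfl⟩
        obtain ⟨u, hu⟩ : ∃ u : ℝ, u = (a₁ - a₂) * v := ⟨_, rfl⟩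
        have hble : b ≤ a₁ * u + a₂ * 0 + α (u, 0) :=
          hb ⟨(u, 0), rfl⟩
        rw [hval u 0] at hble
        have hu2 : (u - 0) ^ 2 + 4 = v ^ 2 + 4 := by
          rw [hu]; linear_combination v ^ 2 * hc1
        have hcv : (a₁ - a₂) * (u - 0) = v := by
          rw [hu]; linear_combination v * hc1
        rw [hu2, show (a₁ - a₂) * (u - 0) / 2 = v / 2 by rw [hcv]] at hble
        have hb1 : b * (1 / b) = 1 := mul_one_div_cancel (ne_of_gt hbpos)
        have h2bv : 0 < 2 * b - v := by
          have : 0 < 1 / b := by positivity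
          rw [hv]; linarith
        have hbv : b * v = b ^ 2 - 1 - b := by
          rw [hv]; field_simp
        have hlt : Real.sqrt (v ^ 2 + 4) < 2 * b - v := by
          have hsq : v ^ 2 + 4 < (2 * b - v) ^ 2 := by nlinarith [hbpos, hbv]
          have := Real.sqrt_lt_sqrt (by positivity) hsq
          rwa [Real.sqrt_sq (le_of_lt h2bv)] at this
        linarith
      · -- a₁ * a₂ > 0
        have hspos : 0 < s := Real.sqrt_pos.mpr hp
        set u : ℝ := -(a₁ - a₂) / s with hu
        have hble : b ≤ a₁ * u + a₂ * 0 + α (u, 0) :=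
          hb ⟨(u, 0), rfl⟩
        rw [hval u 0] at hble
        have hu2 : (u - 0) ^ 2 + 4 = (1 / s) ^ 2 := by
          rw [hu]; field_simp; nlinarith [hc2, hspos]
        have hsqrt : Real.sqrt ((u - 0) ^ 2 + 4) = 1 / s := by
          rw [hu2, Real.sqrt_sq (by positivity)]
        rw [hsqrt] at hble
        have heq : (a₁ - a₂) * (u - 0) / 2 + 1 / 2 * (1 / s) = 2 * s := by
          rw [hu]; field_simp; nlinarith [hc2, hspos]
        linarith
  · intro hne hbdd
    obtain ⟨b, hb⟩ := hbdd
    have hd : a₁ + a₂ - 1 ≠ 0 := fun h => hne (by linarith)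
    set t : ℝ := (b - 2) / (a₁ + a₂ - 1) with ht
    have hble : b ≤ a₁ * t + a₂ * t + α (t, t) := hb ⟨(t, t), rfl⟩
    simp only [α] at hble
    have hs4 : Real.sqrt ((t - t) ^ 2 + 4) = 2 := by
      rw [show (t - t) ^ 2 + 4 = 2 ^ 2 by ring, Real.sqrt_sq (by norm_num)]
    rw [hs4] at hble
    have : a₁ * t + a₂ * t + (-(t + t) / 2 + 1 / 2 * 2) = b - 1 := by
      rw [ht]; field_simp; ring
    linarith
end

section
/- In the discrete-generation model with m(θ,φ) = e^{-φ}(1/(1+θ₁) + 1/(1+θ₂)), the function α(θ) = log(1/(1+θ₁) + 1/(1+θ₂)) (for θ₁,θ₂ > -1) has Legendre transform α*(a) = inf_θ (a·θ + α(θ)) = 1 - a₁ - a₂ + 2 log(√a₁ + √a₂) for a₁, a₂ > 0. -/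
/-!
Put `xᵢ = 1 + θᵢ > 0` and `s = √a₁ + √a₂`. By Cauchy–Schwarz,
`(a₁x₁ + a₂x₂)(1/x₁ + 1/x₂) ≥ s²`, so with `A = a₁x₁ + a₂x₂` the objective is at least
`A - a₁ - a₂ + 2 log s - log A`, and `log A ≤ A - 1` gives the lower bound
`1 - a₁ - a₂ + 2 log s`. Equality holds in both steps when `xᵢ = 1 / (√aᵢ s)`,
for then `A = 1`.
-/

open Real

lemma sq_sqrt_add_sqrt_le_mul_one_div_add_one_div {a₁ a₂ x₁ x₂ : ℝ} (h₁ : 0 ≤ a₁) (h₂ : 0 ≤ a₂)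
    (hx₁ : 0 < x₁) (hx₂ : 0 < x₂) :
    (√a₁ + √a₂) ^ 2 ≤ (a₁ * x₁ + a₂ * x₂) * (1 / x₁ + 1 / x₂) := by
  rw [div_add_div _ _ hx₁.ne' hx₂.ne', ← mul_div_assoc, le_div_iff₀ (mul_pos hx₁ hx₂)]
  have hgap : (a₁ * x₁ + a₂ * x₂) * (1 * x₂ + x₁ * 1) - (√a₁ + √a₂) ^ 2 * (x₁ * x₂) =
      (√a₁ * x₁ - √a₂ * x₂) ^ 2 := by
    linear_combination (-(x₁ * x₂ + x₁ ^ 2)) * sq_sqrt h₁ + (-(x₁ * x₂ + x₂ ^ 2)) * sq_sqrt h₂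
  linarith [sq_nonneg (√a₁ * x₁ - √a₂ * x₂)]

lemma one_add_log_le_add_log_of_le_mul {c A T : ℝ} (hc : 0 < c) (hA : 0 < A) (h : c ≤ A * T) :
    1 + log c ≤ A + log T := by
  have hT : 0 < T := pos_of_mul_pos_right (hc.trans_le h) hA.le
  have hlog : log c ≤ log A + log T := by
    rw [← log_mul hA.ne' hT.ne']
    exact log_le_log hc h
  linarith [log_le_sub_one_of_pos hA]

lemma le_legendre_objective {a₁ a₂ θ₁ θ₂ : ℝ} (h₁ : 0 < a₁) (h₂ : 0 < a₂)
    (hθ₁ : -1 < θ₁) (hθ₂ : -1 < θ₂) :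
    1 - a₁ - a₂ + 2 * log (√a₁ + √a₂) ≤
      a₁ * θ₁ + a₂ * θ₂ + log (1 / (1 + θ₁) + 1 / (1 + θ₂)) := by
  have hx₁ : 0 < 1 + θ₁ := by linarith
  have hx₂ : 0 < 1 + θ₂ := by linarith
  have hs : 0 < √a₁ + √a₂ := by positivity
  have key := one_add_log_le_add_log_of_le_mul (pow_pos hs 2)
    (by positivity : 0 < a₁ * (1 + θ₁) + a₂ * (1 + θ₂))
    (sq_sqrt_add_sqrt_le_mul_one_div_add_one_div h₁.le h₂.le hx₁ hx₂)
  rw [log_pow] at key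
  push_cast at key
  linarith

lemma legendre_objective_at_optimum {a₁ a₂ : ℝ} (h₁ : 0 < a₁) (h₂ : 0 < a₂) :
    let s := √a₁ + √a₂
    let θ₁ := 1 / (√a₁ * s) - 1
    let θ₂ := 1 / (√a₂ * s) - 1
    a₁ * θ₁ + a₂ * θ₂ + log (1 / (1 + θ₁) + 1 / (1 + θ₂)) =
      1 - a₁ - a₂ + 2 * log s := by
  intro s θ₁ θ₂
  have hlin : a₁ * θ₁ + a₂ * θ₂ = 1 - a₁ - a₂ := by
    simp only [θ₁, θ₂, s]
    field_simp
    linear_combination (-√a₂) * sq_sqrt h₁.le + (-√a₁) * sq_sqrt h₂.le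
  have hsum : 1 / (1 + θ₁) + 1 / (1 + θ₂) = s ^ 2 := by
    simp only [θ₁, θ₂, s]
    field_simp
    ring
  rw [hlin, hsum, log_pow]
  push_cast
  ring

theorem stmt_10 (a₁ a₂ : ℝ) (h₁ : 0 < a₁) (h₂ : 0 < a₂) :
    IsGLB ((fun θ : ℝ × ℝ => a₁*θ.1 + a₂*θ.2 + Real.log (1/(1+θ.1) + 1/(1+θ.2))) ''
        {θ : ℝ × ℝ | -1 < θ.1 ∧ -1 < θ.2})
      (1 - a₁ - a₂ + 2 * Real.log (Real.sqrt a₁ + Real.sqrt a₂)) := by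
  refine IsLeast.isGLB ⟨⟨(1 / (√a₁ * (√a₁ + √a₂)) - 1, 1 / (√a₂ * (√a₁ + √a₂)) - 1),
    ⟨?_, ?_⟩, legendre_objective_at_optimum h₁ h₂⟩, ?_⟩
  · linarith [show 0 < 1 / (√a₁ * (√a₁ + √a₂)) by positivity]
  · linarith [show 0 < 1 / (√a₂ * (√a₁ + √a₂)) by positivity]
  · rintro v ⟨θ, ⟨hθ₁, hθ₂⟩, rfl⟩
    exact le_legendre_objective h₁ h₂ hθ₁ hθ₂
end

section
/- For the Beta(2,2) nucleation model with p = 1/2, the function m(θ,φ) = 6/((θ₁+φ+3)(θ₁+φ+2)) + 6/((θ₂+φ+3)(θ₂+φ+2)) satisfies m(θ, α(θ)) = 1 where α(θ) = -(θ₁+θ₂)/2 - 5/2 + (1/2)√((θ₁-θ₂)² + 2√(25(θ₁-θ₂)²+144) + 25), for θ in the region where θᵢ + α(θ) + 2 > 0. -/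
open Real

theorem stmt_13 (θ₁ θ₂ : ℝ) :
    let A : ℝ := -(θ₁+θ₂)/2 - 5/2
      + (1/2) * Real.sqrt ((θ₁-θ₂)^2 + 2*Real.sqrt (25*(θ₁-θ₂)^2+144) + 25)
    θ₁ + A + 2 > 0 → θ₂ + A + 2 > 0 →
    6/((θ₁+A+3)*(θ₁+A+2)) + 6/((θ₂+A+3)*(θ₂+A+2)) = 1 := by
  intro A h1 h2
  have hA : A = -(θ₁+θ₂)/2 - 5/2
      + (1/2) * Real.sqrt ((θ₁-θ₂)^2 + 2*Real.sqrt (25*(θ₁-θ₂)^2+144) + 25) := rfl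
  set r : ℝ := Real.sqrt (25*(θ₁-θ₂)^2+144) with hr
  set s : ℝ := Real.sqrt ((θ₁-θ₂)^2 + 2*r + 25) with hs
  have hr2 : r^2 = 25*(θ₁-θ₂)^2+144 := Real.sq_sqrt (by positivity)
  have hrnn : 0 ≤ r := Real.sqrt_nonneg _
  have hs2 : s^2 = (θ₁-θ₂)^2 + 2*r + 25 := Real.sq_sqrt (by positivity)
  have hsval : s = 2*A + θ₁ + θ₂ + 5 := by rw [hA]; ring
  set a : ℝ := θ₁ + A + 2 with ha
  set b : ℝ := θ₂ + A + 2 with hb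
  have hsab : s = a + b + 1 := by rw [hsval, ha, hb]; ring
  have hrdef : r = 2*a*b + a + b - 12 := by
    have h := hs2
    rw [hsab] at h
    nlinarith [h]
  have h3 : θ₁ + A + 3 = a + 1 := by rw [ha]; ring
  have h4 : θ₂ + A + 3 = b + 1 := by rw [hb]; ring
  rw [h3, h4]
  have ha0 : a ≠ 0 := ne_of_gt h1
  have hb0 : b ≠ 0 := ne_of_gt h2
  have ha1 : a + 1 ≠ 0 := by positivity
  have hb1 : b + 1 ≠ 0 := by positivity
  field_simp
  have key : r^2 = 25*(a-b)^2+144 := by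
    rw [hr2]; congr 1; rw [ha, hb]; ring
  nlinarith [key, hrdef]
end

section
/- Let γ(p) for p ∈ (0,1/2) be defined implicitly by Γ(γ(p)+2α)/Γ(γ(p)+α) = ((2-2p)/(1-2p))·Γ(2α)/Γ(α), for fixed α > 0 (assume γ(p) is the unique positive solution and γ(p) → ∞ as p → 1/2⁻). Then lim_{p→1/2⁻} γ(p)^α (1-2p) = Γ(2α)/Γ(α), and hence γ(p) ~ (Γ(2α)/(Γ(α)(1-2p)))^{1/α} as p → 1/2⁻. -/
/-!
Log-convexity of `Γ` (Hölder's inequality for the Euler integral) gives Wendel's inequality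
`(x / (x + s)) ^ (1 - s) ≤ Γ(x + s) / (x ^ s Γ(x)) ≤ 1` for `0 < s < 1`, hence
`Γ(x + s) ~ x ^ s Γ(x)`; the recurrence `Γ(y + 1) = y Γ(y)` extends this to all `s ≥ 0`.
Consequently `Γ(γ + 2α) / Γ(γ + α) ~ γ ^ α` as `γ → ∞`, and the defining equation of `γ(p)`
turns into `γ(p) ^ α (1 - 2p) → Γ(2α) / Γ(α)`.
-/

open Real Topology Filter

lemma tendsto_add_const_div_self_atTop (c : ℝ) :
    Tendsto (fun x : ℝ => (x + c) / x) atTop (𝓝 1) := by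
  have h : Tendsto (fun x : ℝ => 1 + c / x) atTop (𝓝 (1 + 0)) :=
    tendsto_const_nhds.add (tendsto_const_nhds.div_atTop tendsto_id)
  rw [add_zero] at h
  refine h.congr' ?_
  filter_upwards [eventually_ne_atTop 0] with x hx
  field_simp

namespace Real

lemma Gamma_add_le_rpow_mul_Gamma {x s : ℝ} (hx : 0 < x) (hs₀ : 0 < s) (hs₁ : s < 1) :
    Gamma (x + s) ≤ x ^ s * Gamma x := by
  have hG : 0 < Gamma x := Gamma_pos_of_pos hx
  have h := Gamma_mul_add_mul_le_rpow_Gamma_mul_rpow_Gamma (s := x) (t := x + 1)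
    (a := 1 - s) (b := s) hx (by linarith) (by linarith) hs₀ (by ring)
  rw [show (1 - s) * x + s * (x + 1) = x + s by ring, Gamma_add_one hx.ne'] at h
  calc Gamma (x + s) ≤ Gamma x ^ (1 - s) * (x * Gamma x) ^ s := h
    _ = x ^ s * (Gamma x ^ (1 - s) * Gamma x ^ s) := by rw [mul_rpow hx.le hG.le]; ring
    _ = x ^ s * Gamma x := by rw [← rpow_add hG, sub_add_cancel, rpow_one]

lemma mul_Gamma_le_Gamma_add_mul_rpow {x s : ℝ} (hx : 0 < x) (hs₀ : 0 < s) (hs₁ : s < 1) :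
    x * Gamma x ≤ Gamma (x + s) * (x + s) ^ (1 - s) := by
  have hxs : 0 < x + s := by linarith
  have hG : 0 < Gamma (x + s) := Gamma_pos_of_pos hxs
  have h := Gamma_mul_add_mul_le_rpow_Gamma_mul_rpow_Gamma (s := x + s) (t := x + s + 1)
    (a := s) (b := 1 - s) hxs (by linarith) hs₀ (by linarith) (by ring)
  rw [show s * (x + s) + (1 - s) * (x + s + 1) = x + 1 by ring, Gamma_add_one hx.ne',
    Gamma_add_one hxs.ne'] at h
  calc x * Gamma x ≤ Gamma (x + s) ^ s * ((x + s) * Gamma (x + s)) ^ (1 - s) := h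
    _ = (Gamma (x + s) ^ s * Gamma (x + s) ^ (1 - s)) * (x + s) ^ (1 - s) := by
      rw [mul_rpow hxs.le hG.le]; ring
    _ = Gamma (x + s) * (x + s) ^ (1 - s) := by rw [← rpow_add hG, add_sub_cancel, rpow_one]

lemma div_add_rpow_le_Gamma_add_div {x s : ℝ} (hx : 0 < x) (hs₀ : 0 < s) (hs₁ : s < 1) :
    (x / (x + s)) ^ (1 - s) ≤ Gamma (x + s) / (x ^ s * Gamma x) := by
  have hxs : 0 < x + s := by linarith
  rw [div_rpow hx.le hxs.le, div_le_div_iff₀ (rpow_pos_of_pos hxs _)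
    (mul_pos (rpow_pos_of_pos hx s) (Gamma_pos_of_pos hx))]
  calc x ^ (1 - s) * (x ^ s * Gamma x) = (x ^ (1 - s) * x ^ s) * Gamma x := by ring
    _ = x * Gamma x := by rw [← rpow_add hx, sub_add_cancel, rpow_one]
    _ ≤ Gamma (x + s) * (x + s) ^ (1 - s) := mul_Gamma_le_Gamma_add_mul_rpow hx hs₀ hs₁

lemma tendsto_Gamma_add_div_rpow_mul_Gamma_of_lt_one {s : ℝ} (hs₀ : 0 < s) (hs₁ : s < 1) :
    Tendsto (fun x : ℝ => Gamma (x + s) / (x ^ s * Gamma x)) atTop (𝓝 1) := by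
  have hlow : Tendsto (fun x : ℝ => (x / (x + s)) ^ (1 - s)) atTop (𝓝 1) := by
    have h := ((tendsto_add_const_div_self_atTop s).inv₀ one_ne_zero).rpow_const
      (p := 1 - s) (Or.inl (inv_ne_zero one_ne_zero))
    simpa only [inv_div, inv_one, one_rpow] using h
  refine tendsto_of_tendsto_of_tendsto_of_le_of_le' hlow tendsto_const_nhds ?_ ?_ <;>
    filter_upwards [eventually_gt_atTop 0] with x hx
  · exact div_add_rpow_le_Gamma_add_div hx hs₀ hs₁
  · exact (div_le_one (mul_pos (rpow_pos_of_pos hx s) (Gamma_pos_of_pos hx))).2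
      (Gamma_add_le_rpow_mul_Gamma hx hs₀ hs₁)

lemma tendsto_Gamma_add_one_div_rpow_mul_Gamma {s : ℝ}
    (h : Tendsto (fun x : ℝ => Gamma (x + s) / (x ^ s * Gamma x)) atTop (𝓝 1)) :
    Tendsto (fun x : ℝ => Gamma (x + (s + 1)) / (x ^ (s + 1) * Gamma x)) atTop (𝓝 1) := by
  have h' := (tendsto_add_const_div_self_atTop s).mul h
  rw [one_mul] at h'
  refine h'.congr' ?_
  filter_upwards [eventually_gt_atTop 0, eventually_ne_atTop (-s)] with x hx hxs
  have hxs' : x + s ≠ 0 := fun h => hxs (by linarith)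
  rw [← add_assoc, Gamma_add_one hxs', rpow_add_one hx.ne']
  have := (Gamma_pos_of_pos hx).ne'
  have := (rpow_pos_of_pos hx s).ne'
  field_simp

theorem tendsto_Gamma_add_div_rpow_mul_Gamma {s : ℝ} (hs : 0 ≤ s) :
    Tendsto (fun x : ℝ => Gamma (x + s) / (x ^ s * Gamma x)) atTop (𝓝 1) := by
  suffices key : ∀ n : ℕ, ∀ s : ℝ, 0 ≤ s → s < n →
      Tendsto (fun x : ℝ => Gamma (x + s) / (x ^ s * Gamma x)) atTop (𝓝 1) from
    key (⌊s⌋₊ + 1) s hs (by exact_mod_cast Nat.lt_floor_add_one s)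
  intro n
  induction n with
  | zero => intro s hs hs0; exact absurd hs (not_le.2 (by exact_mod_cast hs0))
  | succ n ih =>
    intro s hs hsn
    rcases lt_or_ge s 1 with hs₁ | hs₁
    · rcases hs.eq_or_lt with rfl | hs₀
      · refine tendsto_const_nhds.congr' ?_
        filter_upwards [eventually_gt_atTop 0] with x hx
        simp [(Gamma_pos_of_pos hx).ne']
      · exact tendsto_Gamma_add_div_rpow_mul_Gamma_of_lt_one hs₀ hs₁
    · have h := tendsto_Gamma_add_one_div_rpow_mul_Gamma
        (ih (s - 1) (by linarith) (by push_cast at hsn; linarith))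
      simpa only [sub_add_cancel] using h

theorem tendsto_Gamma_add_div_Gamma_add_div_rpow {a b : ℝ} (ha : 0 ≤ a) (hb : 0 ≤ b) :
    Tendsto (fun x : ℝ => Gamma (x + b) / Gamma (x + a) / x ^ (b - a)) atTop (𝓝 1) := by
  have h := (tendsto_Gamma_add_div_rpow_mul_Gamma hb).div
    (tendsto_Gamma_add_div_rpow_mul_Gamma ha) one_ne_zero
  rw [div_one] at h
  refine h.congr' ?_
  filter_upwards [eventually_gt_atTop 0] with x hx
  rw [Pi.div_apply, rpow_sub hx]
  have := (Gamma_pos_of_pos hx).ne'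
  have := (Gamma_pos_of_pos (add_pos_of_pos_of_nonneg hx ha)).ne'
  have := (rpow_pos_of_pos hx a).ne'
  have := (rpow_pos_of_pos hx b).ne'
  field_simp

end Real

lemma tendsto_div_rpow_of_tendsto_rpow_mul {ι : Type*} {l : Filter ι} {f g : ι → ℝ} {a C : ℝ}
    (ha : a ≠ 0) (hC : 0 < C) (hf : ∀ᶠ i in l, 0 ≤ f i) (hg : ∀ᶠ i in l, 0 < g i)
    (h : Tendsto (fun i => f i ^ a * g i) l (𝓝 C)) :
    Tendsto (fun i => f i / (C / g i) ^ (1 / a)) l (𝓝 1) := by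
  have h' := (h.div_const C).rpow_const (p := 1 / a) (Or.inl (div_ne_zero hC.ne' hC.ne'))
  rw [div_self hC.ne', one_rpow] at h'
  refine h'.congr' ?_
  filter_upwards [hf, hg] with i hfi hgi
  rw [mul_div_assoc, mul_rpow (rpow_nonneg hfi a) (div_pos hgi hC).le, ← rpow_mul hfi,
    mul_one_div_cancel ha, rpow_one, ← inv_div C, inv_rpow (div_pos hC hgi).le, ← div_eq_mul_inv]

theorem stmt_17 (α : ℝ) (hα : 0 < α) (γ : ℝ → ℝ)
    (hpos : ∀ p ∈ Set.Ioo (0:ℝ) (1/2), 0 < γ p)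
    (heq : ∀ p ∈ Set.Ioo (0:ℝ) (1/2),
      Real.Gamma (γ p + 2*α) / Real.Gamma (γ p + α)
        = ((2-2*p)/(1-2*p)) * (Real.Gamma (2*α) / Real.Gamma α))
    (hdiv : Tendsto γ (𝓝[<] (1/2 : ℝ)) atTop) :
    Tendsto (fun p => (γ p) ^ α * (1-2*p)) (𝓝[<] (1/2 : ℝ))
      (𝓝 (Real.Gamma (2*α) / Real.Gamma α)) ∧
    Tendsto (fun p => γ p / (Real.Gamma (2*α) / (Real.Gamma α * (1-2*p))) ^ (1/α))
      (𝓝[<] (1/2 : ℝ)) (𝓝 1) := by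
  set C := Gamma (2*α) / Gamma α
  have hC : 0 < C := div_pos (Gamma_pos_of_pos (by positivity)) (Gamma_pos_of_pos hα)
  have hIoo : ∀ᶠ p in 𝓝[<] (1/2 : ℝ), p ∈ Set.Ioo (0:ℝ) (1/2) := Ioo_mem_nhdsLT (by norm_num)
  have hratio :=
    (tendsto_Gamma_add_div_Gamma_add_div_rpow (a := α) (b := 2*α) hα.le (by positivity)).comp hdiv
  have hlin : Tendsto (fun p : ℝ => (2 - 2*p) * C) (𝓝[<] (1/2 : ℝ)) (𝓝 C) := by
    have h : Tendsto (fun p : ℝ => (2 - 2*p) * C) (𝓝 (1/2)) (𝓝 ((2 - 2*(1/2)) * C)) :=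
      (by fun_prop : Continuous fun p : ℝ => (2 - 2*p) * C).tendsto _
    norm_num at h
    exact h.mono_left nhdsWithin_le_nhds
  have h₁ : Tendsto (fun p => (γ p) ^ α * (1-2*p)) (𝓝[<] (1/2 : ℝ)) (𝓝 C) := by
    have h := hlin.div hratio one_ne_zero
    rw [div_one] at h
    refine h.congr' ?_
    filter_upwards [hIoo] with p hp
    have := (rpow_pos_of_pos (hpos p hp) α).ne'
    have := (Gamma_pos_of_pos (by linarith [hpos p hp] : 0 < γ p + α)).ne'
    have : 1 - 2*p ≠ 0 := by linarith [hp.2]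
    have : 1 - p ≠ 0 := by linarith [hp.2]
    simp only [Pi.div_apply, Function.comp_apply, heq p hp, show 2*α - α = α by ring]
    field_simp
  refine ⟨h₁, ?_⟩
  have h₂ := tendsto_div_rpow_of_tendsto_rpow_mul hα.ne' hC
    (hIoo.mono fun p hp => (hpos p hp).le) (hIoo.mono fun p hp => by linarith [hp.2]) h₁
  refine h₂.congr' (hIoo.mono fun p hp => ?_)
  simp only [C, div_div]
end
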